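/- In (ℝ³\{0}, g_F) with radial conformal factor F, the great circle β(s) = (R cos(Fs/R), R sin(Fs/R), 0), F = F(R²), parametrized by g_F-arc length, is a geodesic for all R > 0 if and only if F(t) = λ√t for some constant λ ≠ 0; i.e., circles centered at the origin are geodesics precisely when F(t) = √t (up to a multiplicative constant). -/

import Mathlib

/- The circles β(s) = (R cos(F(R²)s/R), R sin(F(R²)s/R), 0), parametrized by
   g_F-arc length, are geodesics of (ℝ³\{0}, g_F) for all R > 0 iff
   F(t) = λ√t for some λ ≠ 0.  The geodesic ODE is
   xₖ'' + (2xₖF'/F)[Σ_{i≠k}(xᵢ')² − (xₖ')²] − (4F'/F)xₖ'·Σ_{i≠k}xᵢxᵢ' = 0. -/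

noncomputable section

open scoped BigOperators

/-- The circle of radius R in the plane x₃ = 0, parametrized by g_F-arc length. -/
def circ (F : ℝ → ℝ) (R s : ℝ) : Fin 3 → ℝ :=
  ![R * Real.cos (F (R ^ 2) * s / R), R * Real.sin (F (R ^ 2) * s / R), 0]

open Real

/-!
Along the circle `circ F R` of radius `R` and angular speed `ω = F(R²)/R` one has `|x|² = R²`,
`x ⬝ x' = 0` and `x'' = -ω² x`, so the `k`-th geodesic equation of `g_F` reduces to
`ω² (2R² F'(R²)/F(R²) - 1) xₖ = 0`. Hence all these circles are geodesics iff `2t F'(t) = F(t)`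
for `t > 0`, i.e. iff `(F/√·)' = 0` on `(0, ∞)`, i.e. iff `F = λ√·` there.
-/

/-- The `k`-th component of the geodesic equation of `F(|x|²)⁻² g₀` along the curve `x`, with
`Σ_{i≠k}` written as the full sum minus its `k`-th term. -/
def geodesicDefect {n : ℕ} (F F' : ℝ → ℝ) (x : ℝ → Fin n → ℝ) (s : ℝ) (k : Fin n) : ℝ :=
  deriv (deriv fun s' => x s' k) s
    + (2 * x s k * F' (∑ i, (x s i) ^ 2) / F (∑ i, (x s i) ^ 2)) *
        ((∑ i, (deriv (fun s' => x s' i) s) ^ 2) - 2 * (deriv (fun s' => x s' k) s) ^ 2)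
    - (4 * F' (∑ i, (x s i) ^ 2) / F (∑ i, (x s i) ^ 2)) * deriv (fun s' => x s' k) s *
        ((∑ i, x s i * deriv (fun s' => x s' i) s) - x s k * deriv (fun s' => x s' k) s)

def circularMotion (c ω φ s : ℝ) : Fin 3 → ℝ :=
  ![c * cos (ω * s + φ), c * sin (ω * s + φ), 0]

section CircularMotion

variable (c ω φ : ℝ)

theorem hasDerivAt_circularMotion (s : ℝ) (k : Fin 3) :
    HasDerivAt (fun s' => circularMotion c ω φ s' k)
      (circularMotion (c * ω) ω (φ + π / 2) s k) s := by
  have hθ : HasDerivAt (fun s' => ω * s' + φ) ω s := ((hasDerivAt_id s).const_mul ω).add_const φ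
    |>.congr_deriv (mul_one ω)
  fin_cases k
  · refine (((hasDerivAt_cos _).comp s hθ).const_mul c).congr_deriv ?_
    simp only [circularMotion, Fin.zero_eta, Matrix.cons_val_zero, ← add_assoc, cos_add_pi_div_two]
    ring
  · refine (((hasDerivAt_sin _).comp s hθ).const_mul c).congr_deriv ?_
    simp only [circularMotion, Fin.mk_one, Matrix.cons_val_one, Matrix.cons_val_zero, ← add_assoc,
      sin_add_pi_div_two]
    ring
  · exact hasDerivAt_const s (0 : ℝ)

theorem deriv_circularMotion (k : Fin 3) :
    deriv (fun s => circularMotion c ω φ s k) = fun s => circularMotion (c * ω) ω (φ + π / 2) s k :=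
  funext fun s => (hasDerivAt_circularMotion c ω φ s k).deriv

theorem deriv_deriv_circularMotion (s : ℝ) (k : Fin 3) :
    deriv (deriv fun s => circularMotion c ω φ s k) s = -(ω ^ 2 * circularMotion c ω φ s k) := by
  rw [deriv_circularMotion, deriv_circularMotion, add_assoc, add_halves]
  fin_cases k <;>
    simp only [circularMotion, Fin.zero_eta, Fin.mk_one, Fin.reduceFinMk, Matrix.cons_val,
      ← add_assoc, cos_add_pi, sin_add_pi] <;> ring

theorem sum_circularMotion_sq (s : ℝ) : ∑ i, circularMotion c ω φ s i ^ 2 = c ^ 2 := by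
  simp only [Fin.sum_univ_three, circularMotion, Matrix.cons_val]
  linear_combination c ^ 2 * sin_sq_add_cos_sq (ω * s + φ)

theorem sum_circularMotion_mul_add_pi_div_two (a s : ℝ) :
    ∑ i, circularMotion c ω φ s i * circularMotion a ω (φ + π / 2) s i = 0 := by
  simp only [Fin.sum_univ_three, circularMotion, Matrix.cons_val, ← add_assoc, cos_add_pi_div_two,
    sin_add_pi_div_two]
  ring

end CircularMotion

theorem geodesicDefect_circularMotion (F F' : ℝ → ℝ) (c ω φ s : ℝ) (k : Fin 3) :
    geodesicDefect F F' (circularMotion c ω φ) s k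
      = ω ^ 2 * (2 * c ^ 2 * F' (c ^ 2) / F (c ^ 2) - 1) * circularMotion c ω φ s k := by
  rw [geodesicDefect, deriv_deriv_circularMotion]
  simp only [deriv_circularMotion, sum_circularMotion_sq, sum_circularMotion_mul_add_pi_div_two]
  ring

theorem circ_eq_circularMotion (F : ℝ → ℝ) (R : ℝ) :
    circ F R = circularMotion R (F (R ^ 2) / R) 0 := by
  funext s
  simp only [circ, circularMotion, add_zero, mul_div_right_comm]

theorem geodesicDefect_circ (F F' : ℝ → ℝ) (R s : ℝ) (k : Fin 3) :
    geodesicDefect F F' (circ F R) s k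
      = (F (R ^ 2) / R) ^ 2 * (2 * R ^ 2 * F' (R ^ 2) / F (R ^ 2) - 1) * circ F R s k := by
  rw [circ_eq_circularMotion, geodesicDefect_circularMotion]

theorem forall_geodesicDefect_circ_eq_zero_iff {F F' : ℝ → ℝ} (hne : ∀ t > (0 : ℝ), F t ≠ 0) :
    (∀ R > (0 : ℝ), ∀ (s : ℝ) (k : Fin 3), geodesicDefect F F' (circ F R) s k = 0) ↔
      ∀ t > (0 : ℝ), 2 * t * F' t = F t := by
  simp_rw [geodesicDefect_circ]
  constructor
  · intro h t ht
    have hR : 0 < √t := sqrt_pos.2 ht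
    have h0 : (F t / √t) ^ 2 * (2 * t * F' t / F t - 1) * √t = 0 := by
      simpa [circ, sq_sqrt ht.le] using h (√t) hR 0 0
    have hω : (F t / √t) ^ 2 ≠ 0 := pow_ne_zero 2 (div_ne_zero (hne t ht) hR.ne')
    have h1 := (mul_eq_zero.1 ((mul_eq_zero.1 h0).resolve_right hR.ne')).resolve_left hω
    rwa [sub_eq_zero, div_eq_one_iff_eq (hne t ht)] at h1
  · intro h R hR s k
    rw [h _ (by positivity), div_self (hne _ (by positivity)), sub_self, mul_zero, zero_mul]

theorem two_mul_mul_eq_iff_exists_eq_mul_sqrt {F F' : ℝ → ℝ}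
    (hd : ∀ t > (0 : ℝ), HasDerivAt F (F' t) t) :
    (∀ t > (0 : ℝ), 2 * t * F' t = F t) ↔ ∃ l, ∀ t > (0 : ℝ), F t = l * √t := by
  constructor
  · intro h
    have hG : ∀ t > (0 : ℝ), HasDerivAt (fun x => F x / √x) 0 t := by
      intro t ht
      have hsqrt : √t ≠ 0 := (sqrt_pos.2 ht).ne'
      refine ((hd t ht).div (hasDerivAt_sqrt ht.ne') hsqrt).congr_deriv ?_
      rw [← h t ht]
      field_simp
      rw [sq_sqrt ht.le]
      ring
    obtain ⟨l, hl⟩ := isOpen_Ioi.exists_is_const_of_deriv_eq_zero isPreconnected_Ioi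
      (fun t ht => (hG t ht).differentiableAt.differentiableWithinAt)
      (fun t ht => (hG t ht).deriv)
    exact ⟨l, fun t ht => (div_eq_iff (sqrt_pos.2 ht).ne').1 (hl t ht)⟩
  · rintro ⟨l, hl⟩ t ht
    have hF' : HasDerivAt F (l * (1 / (2 * √t))) t :=
      ((hasDerivAt_sqrt ht.ne').const_mul l).congr_of_eventuallyEq
        (Filter.eventually_of_mem (Ioi_mem_nhds ht) hl)
    rw [(hd t ht).unique hF', hl t ht]
    field_simp
    rw [sq_sqrt ht.le]
    ring

theorem stmt11 (F F' : ℝ → ℝ)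
    (hd : ∀ t > (0 : ℝ), HasDerivAt F (F' t) t)
    (hne : ∀ t > (0 : ℝ), F t ≠ 0) :
    (∀ R > (0 : ℝ), ∀ (s : ℝ) (k : Fin 3),
      deriv (deriv fun s' => circ F R s' k) s
        + (2 * circ F R s k * F' (∑ i, (circ F R s i) ^ 2) / F (∑ i, (circ F R s i) ^ 2)) *
            ((∑ i, (deriv (fun s' => circ F R s' i) s) ^ 2)
              - 2 * (deriv (fun s' => circ F R s' k) s) ^ 2)
        - (4 * F' (∑ i, (circ F R s i) ^ 2) / F (∑ i, (circ F R s i) ^ 2)) *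
            deriv (fun s' => circ F R s' k) s *
            ((∑ i, circ F R s i * deriv (fun s' => circ F R s' i) s)
              - circ F R s k * deriv (fun s' => circ F R s' k) s)
      = 0) ↔
    ∃ l : ℝ, l ≠ 0 ∧ ∀ t > (0 : ℝ), F t = l * Real.sqrt t := by
  refine (forall_geodesicDefect_circ_eq_zero_iff hne).trans
    ((two_mul_mul_eq_iff_exists_eq_mul_sqrt hd).trans ?_)
  refine ⟨fun ⟨l, hl⟩ => ⟨l, ?_, hl⟩, fun ⟨l, _, hl⟩ => ⟨l, hl⟩⟩
  rintro rfl
  exact hne 1 one_pos (by simpa using hl 1 one_pos)
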